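/- Let α, ε > 0. If ñ: ℕ → ℕ satisfies ñ(d) ≥ 2^{(α+ε)d} for all d, and for each d the points X₁,…,X_{ñ(d)} are chosen independently and uniformly at random from {0,1}^d, then the probability that [0,1]^d_α ⊆ conv{X₁,…,X_{ñ(d)}} tends to 1 as d → ∞. -/

import Mathlib

/-!
A point `z` of `[0,1]^d_α` outside the convex hull of the sample is separated from it by a
hyperplane; the open side containing `z` holds at least `2^{(1-α)d}` cube vertices and no sample
point. Traces of halfspaces on `{0,1}^d` have VC dimension at most `d + 1` (Radon), so by
Sauer–Shelah there are at most `e^{(d+1)^2}` of them, and each is missed by all `n` sample points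
with probability at most `(1 - 2^{-αd})^n ≤ exp(-2^{εd})`. The union bound wins because `2^{εd}`
outgrows `(d+1)^2`.
-/

open Filter
open scoped BigOperators

/-- The 0/1-point of `ℝ^d` associated to a Boolean vector. -/
def bv {d : ℕ} (x : Fin d → Bool) : Fin d → ℝ := fun i => if x i then 1 else 0

/-- `2^d · p(z)`: the minimum number of cube vertices contained in a closed affine
halfspace `{x | ∑ i, a i * x i ≤ c}` containing `z`. -/
noncomputable def minHalfCount (d : ℕ) (z : Fin d → ℝ) : ℕ :=
  sInf {m : ℕ | ∃ (a : Fin d → ℝ) (c : ℝ), (∑ i, a i * z i) ≤ c ∧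
    m = {x : Fin d → Bool | (∑ i, a i * bv x i) ≤ c}.ncard}

/-- `[0,1]^d_α = {z ∈ [0,1]^d : p(z) ≥ 2^{-αd}}`. -/
noncomputable def cubeAlpha (d : ℕ) (α : ℝ) : Set (Fin d → ℝ) :=
  {z | (∀ i, z i ∈ Set.Icc (0 : ℝ) 1) ∧
    (2 : ℝ) ^ (-(α * (d : ℝ))) ≤ (2 : ℝ) ^ (-(d : ℝ)) * (minHalfCount d z : ℝ)}

open Finset Real Topology

section HalfspaceCuts

variable {ι E : Type*} [Fintype ι] [AddCommGroup E] [Module ℝ E]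

open Classical in
noncomputable def halfspaceCuts (v : ι → E) : Finset (Finset ι) :=
  {T | ∃ (f : Module.Dual ℝ E) (c : ℝ), ∀ i, i ∈ T ↔ c < f (v i)}

theorem mem_halfspaceCuts {v : ι → E} {T : Finset ι} :
    T ∈ halfspaceCuts v ↔ ∃ (f : Module.Dual ℝ E) (c : ℝ), ∀ i, i ∈ T ↔ c < f (v i) := by
  simp [halfspaceCuts]

variable [DecidableEq ι]

/-- By Radon's theorem an affinely dependent family splits into two parts whose convex hulls
meet, and no halfspace cuts out exactly one of them. -/
theorem affineIndependent_of_shatters_halfspaceCuts {v : ι → E} {s : Finset ι}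
    (hs : (halfspaceCuts v).Shatters s) : AffineIndependent ℝ (fun i : s => v i) := by
  classical
  by_contra hdep
  obtain ⟨I, p, hpI, hpIc⟩ := Convex.radon_partition hdep
  obtain ⟨T, hT, hsT⟩ := hs (filter_subset (fun i => ∃ h : i ∈ s, ⟨i, h⟩ ∈ I) s)
  obtain ⟨f, c, hfT⟩ := mem_halfspaceCuts.1 hT
  have hI : ∀ x : s, x ∈ I ↔ c < f (v x) := fun x => by
    have hx := Finset.ext_iff.1 hsT x
    simp only [mem_inter, mem_filter, x.2, true_and, exists_true_left, Subtype.coe_eta] at hx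
    rw [← hfT, hx]
  have hgt : c < f p := convexHull_min (by rintro _ ⟨x, hx, rfl⟩; exact (hI x).1 hx)
    (convex_halfSpace_gt f.isLinear c) hpI
  have hle : f p ≤ c := convexHull_min (by rintro _ ⟨x, hx, rfl⟩; exact not_lt.1 ((hI x).not.1 hx))
    (convex_halfSpace_le f.isLinear c) hpIc
  exact hle.not_gt hgt

theorem vcDim_halfspaceCuts_le [FiniteDimensional ℝ E] (v : ι → E) :
    (halfspaceCuts v).vcDim ≤ Module.finrank ℝ E + 1 :=
  Finset.sup_le fun s hs => by
    have := (affineIndependent_of_shatters_halfspaceCuts (mem_shatterer.1 hs)).card_le_finrank_succ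
    simp only [Fintype.card_coe] at this
    exact this.trans (Nat.succ_le_succ (Submodule.finrank_le _))

theorem card_halfspaceCuts_le [FiniteDimensional ℝ E] (v : ι → E) :
    #(halfspaceCuts v) ≤ ∑ k ∈ Iic (Module.finrank ℝ E + 1), (Fintype.card ι).choose k :=
  (card_le_card_shatterer _).trans <| card_shatterer_le_sum_vcDim.trans <|
    sum_le_sum_of_subset (Iic_subset_Iic.2 (vcDim_halfspaceCuts_le v))

end HalfspaceCuts

theorem card_exists_forall_notMem_le {ι : Type*} [Fintype ι] [DecidableEq ι]
    (𝒜 : Finset (Finset ι)) {m : ℝ} (h𝒜 : ∀ T ∈ 𝒜, m ≤ #T) (n : ℕ) :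
    (#{ω : Fin n → ι | ∃ T ∈ 𝒜, ∀ i, ω i ∉ T} : ℝ) ≤ #𝒜 * (Fintype.card ι - m) ^ n := by
  have hsub : ({ω : Fin n → ι | ∃ T ∈ 𝒜, ∀ i, ω i ∉ T} : Finset _) ⊆
      𝒜.biUnion fun T => Fintype.piFinset fun _ => Tᶜ := by
    intro ω
    simp [Fintype.mem_piFinset]
  calc (#{ω : Fin n → ι | ∃ T ∈ 𝒜, ∀ i, ω i ∉ T} : ℝ)
      ≤ ∑ T ∈ 𝒜, (#(Fintype.piFinset fun _ : Fin n => Tᶜ) : ℝ) := by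
        exact_mod_cast (card_le_card hsub).trans card_biUnion_le
    _ ≤ ∑ T ∈ 𝒜, (Fintype.card ι - m) ^ n := sum_le_sum fun T hT => by
        rw [Fintype.card_piFinset_const, card_compl, Nat.cast_pow, Nat.cast_sub (card_le_univ T)]
        exact pow_le_pow_left₀ (sub_nonneg.2 (mod_cast card_le_univ T)) (by linarith [h𝒜 T hT]) n
    _ = #𝒜 * (Fintype.card ι - m) ^ n := by rw [sum_const, nsmul_eq_mul]

theorem ncard_div_card_eq_one_sub {α : Type*} [Fintype α] [Nonempty α] (p : α → Prop) :
    ({x | p x}.ncard : ℝ) / Fintype.card α = 1 - ({x | ¬ p x}.ncard : ℝ) / Fintype.card α := by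
  have hsum := Set.ncard_add_ncard_compl {x | p x}
  rw [Nat.card_eq_fintype_card, Set.compl_ofPred] at hsum
  have hpos : (0 : ℝ) < Fintype.card α := mod_cast Fintype.card_pos
  rw [eq_sub_iff_add_eq, ← add_div, div_eq_one_iff_eq hpos.ne']
  exact_mod_cast hsum

theorem tendsto_add_one_pow_sub_pow_atBot (k : ℕ) {r : ℝ} (hr : 1 < r) :
    Tendsto (fun n : ℕ => ((n : ℝ) + 1) ^ k - r ^ n) atTop atBot := by
  have hr0 : r ≠ 0 := by positivity
  have hquot : Tendsto (fun n : ℕ => ((n : ℝ) + 1) ^ k / r ^ n) atTop (𝓝 0) := by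
    have h := ((tendsto_pow_const_div_const_pow_of_one_lt k hr).comp
      (tendsto_add_atTop_nat 1)).const_mul r
    rw [mul_zero] at h
    refine h.congr fun n => ?_
    simp only [Function.comp_apply, Nat.cast_add, Nat.cast_one, pow_succ]
    field_simp
  refine ((tendsto_pow_atTop_atTop_of_one_lt hr).atTop_mul_neg neg_one_lt_zero
    (by simpa using hquot.sub_const 1)).congr fun n => ?_
  field_simp

theorem minHalfCount_le_ncard {d : ℕ} (z : Fin d → ℝ) (f : Module.Dual ℝ (Fin d → ℝ)) :
    minHalfCount d z ≤ {x : Fin d → Bool | f z ≤ f (bv x)}.ncard := by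
  have hf : ∀ y : Fin d → ℝ, ∑ i, -f (fun j => if i = j then 1 else 0) * y i = -f y := fun y => by
    simp [LinearMap.pi_apply_eq_sum_univ f y, mul_comm]
  refine Nat.sInf_le ⟨fun i => -f (fun j => if i = j then 1 else 0), -f z, (hf z).le, ?_⟩
  simp only [hf, neg_le_neg_iff]

theorem two_pow_mul_le_minHalfCount {d : ℕ} {α : ℝ} {z : Fin d → ℝ} (hz : z ∈ cubeAlpha d α) :
    2 ^ d * 2 ^ (-(α * d)) ≤ (minHalfCount d z : ℝ) := by
  calc 2 ^ d * 2 ^ (-(α * d)) ≤ 2 ^ d * (2 ^ (-(d : ℝ)) * (minHalfCount d z : ℝ)) := by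
        gcongr; exact hz.2
    _ = minHalfCount d z := by rw [Real.rpow_neg zero_le_two, Real.rpow_natCast]; field_simp

theorem exists_large_halfspaceCut_avoiding {d n : ℕ} {α : ℝ} {ω : Fin n → Fin d → Bool}
    {z : Fin d → ℝ} (hz : z ∈ cubeAlpha d α) (hzω : z ∉ convexHull ℝ (bv '' Set.range ω)) :
    ∃ T ∈ halfspaceCuts (bv (d := d)), 2 ^ d * 2 ^ (-(α * d)) ≤ (#T : ℝ) ∧ ∀ i, ω i ∉ T := by
  classical
  obtain ⟨f, u, hfω, hfz⟩ := geometric_hahn_banach_closed_point (convex_convexHull ℝ _)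
    (((Set.finite_range ω).image bv).isClosed_convexHull (𝕜 := ℝ)) hzω
  refine ⟨({x | u < f (bv x)} : Finset _), mem_halfspaceCuts.2 ⟨f, u, fun x => by simp⟩, ?_,
    fun i hi => ?_⟩
  · have hsub : {x | f z ≤ f (bv x)} ⊆ ({x | u < f (bv x)} : Finset (Fin d → Bool)) :=
      fun x hx => by simpa using hfz.trans_le hx
    calc 2 ^ d * 2 ^ (-(α * d)) ≤ (minHalfCount d z : ℝ) := two_pow_mul_le_minHalfCount hz
      _ ≤ _ := by
        exact_mod_cast (minHalfCount_le_ncard z f).trans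
          ((Set.ncard_le_ncard hsub).trans (Set.ncard_coe_finset _).le)
  · exact (hfω _ (subset_convexHull ℝ _ ⟨ω i, ⟨i, rfl⟩, rfl⟩)).not_gt (by simpa using hi)

theorem card_halfspaceCuts_bv_le (d : ℕ) :
    (#(halfspaceCuts (bv (d := d))) : ℝ) ≤ exp ((d + 1) ^ 2) := by
  have hsum : ∑ k ∈ Iic (d + 1), (2 ^ d).choose k ≤ (d + 2) * (2 ^ d) ^ (d + 1) := by
    calc ∑ k ∈ Iic (d + 1), (2 ^ d).choose k ≤ ∑ _k ∈ Iic (d + 1), (2 ^ d) ^ (d + 1) := by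
          gcongr with k hk
          exact (Nat.choose_le_pow _ _).trans
            (Nat.pow_le_pow_right Nat.one_le_two_pow (mem_Iic.1 hk))
      _ = (d + 2) * (2 ^ d) ^ (d + 1) := by rw [sum_const, Nat.card_Iic, smul_eq_mul]
  have hcard := card_halfspaceCuts_le (bv (d := d))
  simp only [Module.finrank_fin_fun, Fintype.card_fun, Fintype.card_bool, Fintype.card_fin]
    at hcard
  have htwo : (2 : ℝ) ≤ exp 1 := by linarith [add_one_le_exp (1 : ℝ)]
  calc (#(halfspaceCuts (bv (d := d))) : ℝ) ≤ (d + 2) * 2 ^ (d * (d + 1)) := by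
        rw [pow_mul]; exact_mod_cast hcard.trans hsum
    _ ≤ exp (d + 1) * exp 1 ^ (d * (d + 1)) := by
        gcongr
        linarith [add_one_le_exp ((d : ℝ) + 1)]
    _ = exp ((d + 1) ^ 2) := by
        rw [exp_one_pow, ← exp_add]
        push_cast
        ring_nf

theorem ncard_not_subset_convexHull_le {α : ℝ} (hα : 0 ≤ α) (d n : ℕ) :
    ({ω : Fin n → Fin d → Bool | ¬ cubeAlpha d α ⊆ convexHull ℝ (bv '' Set.range ω)}.ncard : ℝ)
      ≤ #(halfspaceCuts (bv (d := d))) * (2 ^ d * (1 - 2 ^ (-(α * d)))) ^ n := by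
  classical
  set 𝒜 := (halfspaceCuts (bv (d := d))).filter fun T => 2 ^ d * 2 ^ (-(α * d)) ≤ (#T : ℝ)
  have hsub : {ω : Fin n → Fin d → Bool | ¬ cubeAlpha d α ⊆ convexHull ℝ (bv '' Set.range ω)} ⊆
      ({ω : Fin n → Fin d → Bool | ∃ T ∈ 𝒜, ∀ i, ω i ∉ T} : Finset _) := by
    intro ω hω
    obtain ⟨z, hz, hzω⟩ := Set.not_subset.1 hω
    obtain ⟨T, hT, hTcard, hωT⟩ := exists_large_halfspaceCut_avoiding hz hzω
    simpa [𝒜] using ⟨T, ⟨hT, hTcard⟩, hωT⟩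
  have ht : (2 : ℝ) ^ (-(α * d)) ≤ 1 :=
    Real.rpow_le_one_of_one_le_of_nonpos one_le_two (by simp only [neg_nonpos]; positivity)
  calc ({ω : Fin n → Fin d → Bool | ¬ cubeAlpha d α ⊆ convexHull ℝ (bv '' Set.range ω)}.ncard : ℝ)
      ≤ #{ω : Fin n → Fin d → Bool | ∃ T ∈ 𝒜, ∀ i, ω i ∉ T} := by
        exact_mod_cast (Set.ncard_le_ncard hsub).trans (Set.ncard_coe_finset _).le
    _ ≤ #𝒜 * (Fintype.card (Fin d → Bool) - 2 ^ d * 2 ^ (-(α * d))) ^ n :=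
        card_exists_forall_notMem_le 𝒜 (fun T hT => (mem_filter.1 hT).2) n
    _ = #𝒜 * (2 ^ d * (1 - 2 ^ (-(α * d)))) ^ n := by simp [mul_one_sub]
    _ ≤ #(halfspaceCuts (bv (d := d))) * (2 ^ d * (1 - 2 ^ (-(α * d)))) ^ n := by
        gcongr
        exact filter_subset _ _

theorem ncard_not_subset_convexHull_div_le {α : ℝ} (hα : 0 ≤ α) (d n : ℕ) :
    ({ω : Fin n → Fin d → Bool | ¬ cubeAlpha d α ⊆ convexHull ℝ (bv '' Set.range ω)}.ncard : ℝ) /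
      Fintype.card (Fin n → Fin d → Bool) ≤ exp ((d + 1) ^ 2 - 2 ^ (-(α * d)) * n) := by
  set t : ℝ := 2 ^ (-(α * d))
  have ht : t ≤ 1 :=
    Real.rpow_le_one_of_one_le_of_nonpos one_le_two (by simp only [neg_nonpos]; positivity)
  have hcard : (Fintype.card (Fin n → Fin d → Bool) : ℝ) = (2 ^ d) ^ n := by simp
  rw [hcard, div_le_iff₀ (by positivity)]
  calc _ ≤ #(halfspaceCuts (bv (d := d))) * (2 ^ d * (1 - t)) ^ n :=
        ncard_not_subset_convexHull_le hα d n
    _ = #(halfspaceCuts (bv (d := d))) * (1 - t) ^ n * (2 ^ d) ^ n := by rw [mul_pow]; ring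
    _ ≤ exp ((d + 1) ^ 2) * exp (-t) ^ n * (2 ^ d) ^ n := by
        gcongr
        · exact card_halfspaceCuts_bv_le d
        · exact one_sub_le_exp_neg t
    _ = exp ((d + 1) ^ 2 - t * n) * (2 ^ d) ^ n := by
        rw [← exp_nat_mul, ← exp_add]
        ring_nf

/-- If `ñ(d) ≥ 2^{(α+ε)d}` and `X₁,…,X_{ñ(d)}` are independent uniform points of
`{0,1}^d`, then with probability tending to 1 the set `[0,1]^d_α` is contained in
their convex hull. -/
theorem stmt7 (α ε : ℝ) (hα : 0 < α) (hε : 0 < ε) (nt : ℕ → ℕ)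
    (hn : ∀ d : ℕ, (2 : ℝ) ^ ((α + ε) * (d : ℝ)) ≤ (nt d : ℝ)) :
    Tendsto (fun d : ℕ =>
        (({ω : Fin (nt d) → Fin d → Bool |
              cubeAlpha d α ⊆ convexHull ℝ (bv '' Set.range ω)}.ncard : ℝ) /
          (Fintype.card (Fin (nt d) → Fin d → Bool) : ℝ)))
      atTop (nhds 1) := by
  have hr : 1 < (2 : ℝ) ^ ε := Real.one_lt_rpow one_lt_two hε
  have hexponent : ∀ d : ℕ, ((2 : ℝ) ^ ε) ^ d ≤ 2 ^ (-(α * d)) * nt d := fun d => by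
    calc ((2 : ℝ) ^ ε) ^ d = 2 ^ (-(α * d)) * 2 ^ ((α + ε) * d) := by
          rw [← Real.rpow_mul_natCast zero_le_two, ← Real.rpow_add two_pos]; ring_nf
      _ ≤ 2 ^ (-(α * d)) * nt d := by gcongr; exact hn d
  have hbad : Tendsto (fun d : ℕ =>
      ({ω : Fin (nt d) → Fin d → Bool | ¬ cubeAlpha d α ⊆ convexHull ℝ (bv '' Set.range ω)}.ncard
        : ℝ) / Fintype.card (Fin (nt d) → Fin d → Bool)) atTop (𝓝 0) := by
    refine squeeze_zero (fun d => by positivity) (fun d => ?_)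
      (tendsto_exp_atBot.comp (tendsto_add_one_pow_sub_pow_atBot 2 hr))
    refine (ncard_not_subset_convexHull_div_le hα.le d (nt d)).trans (exp_le_exp.2 ?_)
    linarith [hexponent d]
  rw [← sub_zero (1 : ℝ)]
  exact (hbad.const_sub 1).congr fun d => (ncard_div_card_eq_one_sub _).symm
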